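/- Multiplier bound underlying the derivative-nonlinearity smoothing estimate: for every s > 1/2 and a < min(2s−1, 1/4) there exist ε > 0 and a constant C such that for all real numbers ξ₀, ξ₁, ξ₂, ξ₃ with ξ₀ − ξ₁ + ξ₂ − ξ₃ = 0, one has ⟨ξ₀⟩^{s+a} ⟨ξ₁⟩^{−s} ⟨ξ₂⟩^{1−s} ⟨ξ₃⟩^{−s} ⟨ξ₀−ξ₁⟩^{−(1/2−ε)} ⟨ξ₀−ξ₃⟩^{−(1/2−ε)} · ⟨ξ_mid⟩^{1/4} ⟨ξ_max⟩^{−1/4} ≤ C, where among the four numbers ξ₀, ξ₁, ξ₂, ξ₃ ordered by absolute value |ξ_min| ≤ |ξ_mid| ≤ |ξ_max1| ≤ |ξ_max|, ξ_max denotes one of largest absolute value and ξ_mid one of second-smallest absolute value. -/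
import Mathlib

open scoped ENNReal

noncomputable section

/-- The Japanese bracket `⟨x⟩ = (1+x²)^{1/2}`. -/
def jap (x : ℝ) : ℝ := Real.sqrt (1 + x ^ 2)

lemma one_le_jap (x : ℝ) : 1 ≤ jap x := by
  rw [jap]
  calc (1:ℝ) = Real.sqrt 1 := Real.sqrt_one.symm
    _ ≤ Real.sqrt (1 + x ^ 2) := Real.sqrt_le_sqrt (by nlinarith [sq_nonneg x])

lemma jap_pos (x : ℝ) : 0 < jap x := lt_of_lt_of_le one_pos (one_le_jap x)

lemma jap_mono {x y : ℝ} (h : |x| ≤ |y|) : jap x ≤ jap y := by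
  apply Real.sqrt_le_sqrt
  nlinarith [sq_abs x, sq_abs y, mul_self_le_mul_self (abs_nonneg x) h,
    sq_nonneg (|x|), sq_nonneg (|y|)]

lemma jap_neg (x : ℝ) : jap (-x) = jap x := by rw [jap, jap, neg_sq]

lemma jap_add_le (x y : ℝ) : jap (x + y) ≤ 2 * (jap x * jap y) := by
  have hx : jap x ^ 2 = 1 + x ^ 2 := Real.sq_sqrt (by positivity)
  have hy : jap y ^ 2 = 1 + y ^ 2 := Real.sq_sqrt (by positivity)
  have h4 : 1 + (x + y) ^ 2 ≤ (2 * (jap x * jap y)) ^ 2 := by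
    have : (2 * (jap x * jap y)) ^ 2 = 4 * (jap x ^ 2 * jap y ^ 2) := by ring
    rw [this, hx, hy]
    nlinarith [sq_nonneg (x - y), sq_nonneg (x * y)]
  calc jap (x + y) = Real.sqrt (1 + (x + y) ^ 2) := rfl
    _ ≤ Real.sqrt ((2 * (jap x * jap y)) ^ 2) := Real.sqrt_le_sqrt h4
    _ = 2 * (jap x * jap y) := Real.sqrt_sq (le_of_lt (mul_pos two_pos (mul_pos (jap_pos x) (jap_pos y))))

lemma lj_nonneg (x : ℝ) : 0 ≤ Real.log (jap x) := Real.log_nonneg (one_le_jap x)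

lemma lj_mono {x y : ℝ} (h : |x| ≤ |y|) : Real.log (jap x) ≤ Real.log (jap y) :=
  Real.log_le_log (jap_pos x) (jap_mono h)

lemma lj_add (x y : ℝ) :
    Real.log (jap (x + y)) ≤ Real.log (jap x) + Real.log (jap y) + 1 := by
  have h1 : Real.log (jap (x + y)) ≤ Real.log (2 * (jap x * jap y)) :=
    Real.log_le_log (jap_pos _) (jap_add_le x y)
  have h2 : Real.log (2 * (jap x * jap y)) =
      Real.log 2 + (Real.log (jap x) + Real.log (jap y)) := by
    rw [Real.log_mul (by norm_num) (ne_of_gt (mul_pos (jap_pos x) (jap_pos y))),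
      Real.log_mul (ne_of_gt (jap_pos x)) (ne_of_gt (jap_pos y))]
  have h3 : Real.log 2 ≤ 1 := by
    have := Real.log_le_sub_one_of_pos (show (0:ℝ) < 2 by norm_num)
    linarith
  linarith

lemma lj_sub (x y : ℝ) :
    Real.log (jap (x - y)) ≤ Real.log (jap x) + Real.log (jap y) + 1 := by
  have := lj_add x (-y)
  rw [show x + -y = x - y by ring, jap_neg] at this
  exact this

lemma mid_le_pair (x m y M c₁ c₂ c₃ c₄ : ℝ)
    (h : ({x, m, y, M} : Multiset ℝ) = ({c₁, c₂, c₃, c₄} : Multiset ℝ))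
    (h1 : |x| ≤ |m|) (h2 : |m| ≤ |y|) (h3 : |y| ≤ |M|) :
    |m| ≤ max |c₃| |c₄| := by
  classical
  by_contra hc
  push_neg at hc
  have hc3 : |c₃| < |m| := (le_max_left _ _).trans_lt hc
  have hc4 : |c₄| < |m| := (le_max_right _ _).trans_lt hc
  have hcnt := congrArg (Multiset.countP (fun z : ℝ => |z| < |m|)) h
  simp only [Multiset.insert_eq_cons, ← Multiset.cons_zero, Multiset.countP_cons,
    Multiset.countP_zero] at hcnt
  have hym : ¬ |y| < |m| := not_lt.mpr h2
  have hMm : ¬ |M| < |m| := not_lt.mpr (h2.trans h3)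
  simp only [hc3, hc4, hym, hMm, lt_self_iff_false, if_true, if_false,
    if_neg, if_pos] at hcnt
  split_ifs at hcnt <;> omega

set_option maxHeartbeats 2000000 in
lemma core_bound (s a e p q r t d1 d2 m M : ℝ)
    (hs1 : 1/2 ≤ s) (hs2 : s ≤ 1)
    (ha1 : a + 8*e ≤ 2*s - 1) (ha2 : a + 8*e ≤ 1/4) (ha3 : -1 ≤ a)
    (he1 : 0 ≤ e) (he2 : e ≤ 1/64)
    (hp : 0 ≤ p) (hq : 0 ≤ q) (hr : 0 ≤ r) (ht : 0 ≤ t)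
    (hd1 : 0 ≤ d1) (hd2 : 0 ≤ d2) (hm : 0 ≤ m) (hM : 0 ≤ M)
    (hG1 : p ≤ q + d1 + 1) (hG2 : q ≤ p + d1 + 1)
    (hG3 : r ≤ t + d1 + 1) (hG4 : t ≤ r + d1 + 1)
    (hG5 : p ≤ t + d2 + 1) (hG6 : t ≤ p + d2 + 1)
    (hG7 : q ≤ r + d2 + 1) (hG8 : r ≤ q + d2 + 1)
    (hG9 : p ≤ q + r + t + 2) (hG10 : r ≤ p + q + t + 2)
    (hG11 : q ≤ p + r + t + 2) (hG12 : t ≤ p + q + r + 2)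
    (hMp : p ≤ M) (hMq : q ≤ M) (hMr : r ≤ M) (hMt : t ≤ M)
    (hmid1 : m ≤ max q t) (hmid2 : m ≤ max r t) :
    (s+a)*p - s*q + (1-s)*r - s*t - (1/2-e)*(d1+d2) + m/4 - M/4 ≤ 100 := by
  rcases le_total t q with h1 | h1 <;> rcases le_total t r with h2 | h2
  · -- case q>=t, r>=t
    have hmq : m ≤ q := hmid1.trans (max_le le_rfl h1)
    have hmr : m ≤ r := hmid2.trans (max_le le_rfl h2)
    have X1 : (0:ℝ) ≤ (s - 1/2) * (q + d1 + 1 - p) := mul_nonneg (by linarith) (by linarith)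
    have X2 : (0:ℝ) ≤ (a + 1) * (q + d1 + 1 - p) := mul_nonneg (by linarith) (by linarith)
    have X3 : (0:ℝ) ≤ (1/4 - a - 8*e) * (p + d1 + 1 - q) := mul_nonneg (by linarith) (by linarith)
    have X4 : (0:ℝ) ≤ (1 - s) * (t + d1 + 1 - r) := mul_nonneg (by linarith) (by linarith)
    have X5 : (0:ℝ) ≤ (s - 1/2) * (t + d2 + 1 - p) := mul_nonneg (by linarith) (by linarith)
    have X6 : (0:ℝ) ≤ (a + 1) * (t + d2 + 1 - p) := mul_nonneg (by linarith) (by linarith)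
    have X7 : (0:ℝ) ≤ (1/4 - a - 8*e) * (p + d2 + 1 - t) := mul_nonneg (by linarith) (by linarith)
    have X8 : (0:ℝ) ≤ (e) * (p + d2 + 1 - t) := mul_nonneg (by linarith) (by linarith)
    have X9 : (0:ℝ) ≤ (1 - s) * (q + d2 + 1 - r) := mul_nonneg (by linarith) (by linarith)
    have X10 : (0:ℝ) ≤ (e) * (q + r + t + 2 - p) := mul_nonneg (by linarith) (by linarith)
    have X11 : (0:ℝ) ≤ (e) * (p + q + t + 2 - r) := mul_nonneg (by linarith) (by linarith)
    have X12 : (0:ℝ) ≤ (e) * (p + r + t + 2 - q) := mul_nonneg (by linarith) (by linarith)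
    have X13 : (0:ℝ) ≤ (2*s - 1 - a - 8*e) * (M - p) := mul_nonneg (by linarith) (by linarith)
    have X14 : (0:ℝ) ≤ (a + 1) * (M - p) := mul_nonneg (by linarith) (by linarith)
    have X15 : (0:ℝ) ≤ (1/4 - a - 8*e) * (M - q) := mul_nonneg (by linarith) (by linarith)
    have X16 : (0:ℝ) ≤ (e) * (M - q) := mul_nonneg (by linarith) (by linarith)
    have X17 : (0:ℝ) ≤ (1 - s) * (M - r) := mul_nonneg (by linarith) (by linarith)
    have X18 : (0:ℝ) ≤ (2*s - 1 - a - 8*e) * (q - t) := mul_nonneg (by linarith) (by linarith)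
    have X19 : (0:ℝ) ≤ (1/4 - a - 8*e) * (q - t) := mul_nonneg (by linarith) (by linarith)
    have X20 : (0:ℝ) ≤ (a + 1) * (q - t) := mul_nonneg (by linarith) (by linarith)
    have X21 : (0:ℝ) ≤ (2*s - 1 - a - 8*e) * (t) := mul_nonneg (by linarith) (by linarith)
    linarith
  · -- case q>=t, t>=r
    have hmq : m ≤ q := hmid1.trans (max_le le_rfl h1)
    have hmt : m ≤ t := hmid2.trans (max_le h2 le_rfl)
    have X1 : (0:ℝ) ≤ (s - 1/2) * (q + d1 + 1 - p) := mul_nonneg (by linarith) (by linarith)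
    have X2 : (0:ℝ) ≤ (a + 1) * (q + d1 + 1 - p) := mul_nonneg (by linarith) (by linarith)
    have X3 : (0:ℝ) ≤ (1 - s) * (p + d1 + 1 - q) := mul_nonneg (by linarith) (by linarith)
    have X4 : (0:ℝ) ≤ (1/4 - a - 8*e) * (p + d1 + 1 - q) := mul_nonneg (by linarith) (by linarith)
    have X5 : (0:ℝ) ≤ (e) * (p + d1 + 1 - q) := mul_nonneg (by linarith) (by linarith)
    have X6 : (0:ℝ) ≤ (s - 1/2) * (t + d2 + 1 - p) := mul_nonneg (by linarith) (by linarith)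
    have X7 : (0:ℝ) ≤ (a + 1) * (t + d2 + 1 - p) := mul_nonneg (by linarith) (by linarith)
    have X8 : (0:ℝ) ≤ (1 - s) * (p + d2 + 1 - t) := mul_nonneg (by linarith) (by linarith)
    have X9 : (0:ℝ) ≤ (1/4 - a - 8*e) * (p + d2 + 1 - t) := mul_nonneg (by linarith) (by linarith)
    have X10 : (0:ℝ) ≤ (e) * (p + d2 + 1 - t) := mul_nonneg (by linarith) (by linarith)
    have X11 : (0:ℝ) ≤ (e) * (q + r + t + 2 - p) := mul_nonneg (by linarith) (by linarith)
    have X12 : (0:ℝ) ≤ (e) * (p + q + t + 2 - r) := mul_nonneg (by linarith) (by linarith)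
    have X13 : (0:ℝ) ≤ (a + 1) * (M - p) := mul_nonneg (by linarith) (by linarith)
    have X14 : (0:ℝ) ≤ (e) * (M - q) := mul_nonneg (by linarith) (by linarith)
    have X15 : (0:ℝ) ≤ (1/4 - a - 8*e) * (M - r) := mul_nonneg (by linarith) (by linarith)
    have X16 : (0:ℝ) ≤ (2*s - 1 - a - 8*e) * (t - r) := mul_nonneg (by linarith) (by linarith)
    have X17 : (0:ℝ) ≤ (1/4 - a - 8*e) * (t - r) := mul_nonneg (by linarith) (by linarith)
    have X18 : (0:ℝ) ≤ (a + 1) * (t - r) := mul_nonneg (by linarith) (by linarith)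
    have X19 : (0:ℝ) ≤ (2*s - 1 - a - 8*e) * (q) := mul_nonneg (by linarith) (by linarith)
    have X20 : (0:ℝ) ≤ (2*s - 1 - a - 8*e) * (r) := mul_nonneg (by linarith) (by linarith)
    linarith
  · -- case t>=q, r>=t
    have hmt : m ≤ t := hmid1.trans (max_le h1 le_rfl)
    have hmr : m ≤ r := hmid2.trans (max_le le_rfl h2)
    have X1 : (0:ℝ) ≤ (a + 1) * (q + d1 + 1 - p) := mul_nonneg (by linarith) (by linarith)
    have X2 : (0:ℝ) ≤ (1/4 - a - 8*e) * (p + d1 + 1 - q) := mul_nonneg (by linarith) (by linarith)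
    have X3 : (0:ℝ) ≤ (1/4 - a - 8*e) * (t + d1 + 1 - r) := mul_nonneg (by linarith) (by linarith)
    have X4 : (0:ℝ) ≤ (a + 1) * (t + d1 + 1 - r) := mul_nonneg (by linarith) (by linarith)
    have X5 : (0:ℝ) ≤ (e) * (r + d1 + 1 - t) := mul_nonneg (by linarith) (by linarith)
    have X6 : (0:ℝ) ≤ (s - 1/2) * (t + d2 + 1 - p) := mul_nonneg (by linarith) (by linarith)
    have X7 : (0:ℝ) ≤ (a + 1) * (t + d2 + 1 - p) := mul_nonneg (by linarith) (by linarith)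
    have X8 : (0:ℝ) ≤ (1/4 - a - 8*e) * (p + d2 + 1 - t) := mul_nonneg (by linarith) (by linarith)
    have X9 : (0:ℝ) ≤ (e) * (p + d2 + 1 - t) := mul_nonneg (by linarith) (by linarith)
    have X10 : (0:ℝ) ≤ (1 - s) * (q + d2 + 1 - r) := mul_nonneg (by linarith) (by linarith)
    have X11 : (0:ℝ) ≤ (a + 1) * (q + d2 + 1 - r) := mul_nonneg (by linarith) (by linarith)
    have X12 : (0:ℝ) ≤ (2*s - 1 - a - 8*e) * (q + r + t + 2 - p) := mul_nonneg (by linarith) (by linarith)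
    have X13 : (0:ℝ) ≤ (e) * (q + r + t + 2 - p) := mul_nonneg (by linarith) (by linarith)
    have X14 : (0:ℝ) ≤ (e) * (p + q + t + 2 - r) := mul_nonneg (by linarith) (by linarith)
    have X15 : (0:ℝ) ≤ (s - 1/2) * (M - p) := mul_nonneg (by linarith) (by linarith)
    have X16 : (0:ℝ) ≤ (a + 1) * (M - p) := mul_nonneg (by linarith) (by linarith)
    have X17 : (0:ℝ) ≤ (e) * (M - q) := mul_nonneg (by linarith) (by linarith)
    have X18 : (0:ℝ) ≤ (1 - s) * (M - r) := mul_nonneg (by linarith) (by linarith)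
    have X19 : (0:ℝ) ≤ (1/4 - a - 8*e) * (M - r) := mul_nonneg (by linarith) (by linarith)
    have X20 : (0:ℝ) ≤ (2*s - 1 - a - 8*e) * (t - q) := mul_nonneg (by linarith) (by linarith)
    have X21 : (0:ℝ) ≤ (1/4 - a - 8*e) * (t - q) := mul_nonneg (by linarith) (by linarith)
    have X22 : (0:ℝ) ≤ (2*s - 1 - a - 8*e) * (q) := mul_nonneg (by linarith) (by linarith)
    linarith
  · -- case t>=q, t>=r
    have hmt : m ≤ t := hmid1.trans (max_le h1 le_rfl)
    have hmt' : m ≤ t := hmid2.trans (max_le h2 le_rfl)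
    have X1 : (0:ℝ) ≤ (1/4 - a - 8*e) * (q + d1 + 1 - p) := mul_nonneg (by linarith) (by linarith)
    have X2 : (0:ℝ) ≤ (a + 1) * (q + d1 + 1 - p) := mul_nonneg (by linarith) (by linarith)
    have X3 : (0:ℝ) ≤ (1/4 - a - 8*e) * (p + d1 + 1 - q) := mul_nonneg (by linarith) (by linarith)
    have X4 : (0:ℝ) ≤ (e) * (p + d1 + 1 - q) := mul_nonneg (by linarith) (by linarith)
    have X5 : (0:ℝ) ≤ (s - 1/2) * (t + d2 + 1 - p) := mul_nonneg (by linarith) (by linarith)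
    have X6 : (0:ℝ) ≤ (a + 1) * (t + d2 + 1 - p) := mul_nonneg (by linarith) (by linarith)
    have X7 : (0:ℝ) ≤ (1 - s) * (p + d2 + 1 - t) := mul_nonneg (by linarith) (by linarith)
    have X8 : (0:ℝ) ≤ (1/4 - a - 8*e) * (p + d2 + 1 - t) := mul_nonneg (by linarith) (by linarith)
    have X9 : (0:ℝ) ≤ (e) * (p + d2 + 1 - t) := mul_nonneg (by linarith) (by linarith)
    have X10 : (0:ℝ) ≤ (1 - s) * (q + d2 + 1 - r) := mul_nonneg (by linarith) (by linarith)
    have X11 : (0:ℝ) ≤ (a + 1) * (q + d2 + 1 - r) := mul_nonneg (by linarith) (by linarith)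
    have X12 : (0:ℝ) ≤ (2*s - 1 - a - 8*e) * (q + r + t + 2 - p) := mul_nonneg (by linarith) (by linarith)
    have X13 : (0:ℝ) ≤ (e) * (q + r + t + 2 - p) := mul_nonneg (by linarith) (by linarith)
    have X14 : (0:ℝ) ≤ (e) * (p + q + t + 2 - r) := mul_nonneg (by linarith) (by linarith)
    have X15 : (0:ℝ) ≤ (s - 1/2) * (M - p) := mul_nonneg (by linarith) (by linarith)
    have X16 : (0:ℝ) ≤ (a + 1) * (M - p) := mul_nonneg (by linarith) (by linarith)
    have X17 : (0:ℝ) ≤ (1/4 - a - 8*e) * (M - r) := mul_nonneg (by linarith) (by linarith)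
    have X18 : (0:ℝ) ≤ (e) * (M - r) := mul_nonneg (by linarith) (by linarith)
    have X19 : (0:ℝ) ≤ (1 - s) * (M - t) := mul_nonneg (by linarith) (by linarith)
    have X20 : (0:ℝ) ≤ (1/4 - a - 8*e) * (t - r) := mul_nonneg (by linarith) (by linarith)
    have X21 : (0:ℝ) ≤ (a + 1) * (t - r) := mul_nonneg (by linarith) (by linarith)
    have X22 : (0:ℝ) ≤ (2*s - 1 - a - 8*e) * (q) := mul_nonneg (by linarith) (by linarith)
    have X23 : (0:ℝ) ≤ (2*s - 1 - a - 8*e) * (r) := mul_nonneg (by linarith) (by linarith)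
    linarith

set_option maxHeartbeats 1000000 in
/-- Multiplier bound underlying the derivative-nonlinearity smoothing estimate: for
`s > 1/2` and `a < min(2s-1, 1/4)` there are `ε > 0` and `C` such that for all
`ξ₀ - ξ₁ + ξ₂ - ξ₃ = 0`,
`⟨ξ₀⟩^{s+a}⟨ξ₁⟩^{-s}⟨ξ₂⟩^{1-s}⟨ξ₃⟩^{-s}⟨ξ₀-ξ₁⟩^{-(1/2-ε)}⟨ξ₀-ξ₃⟩^{-(1/2-ε)}
  ⟨ξ_mid⟩^{1/4}⟨ξ_max⟩^{-1/4} ≤ C`,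
where `ξ_max` is one of the four numbers of largest absolute value and `ξ_mid` one of
second-smallest absolute value. -/
theorem statement_9 (s a : ℝ) (hs : 1/2 < s) (ha : a < min (2 * s - 1) (1/4)) :
    ∃ ε C : ℝ, 0 < ε ∧ 0 < C ∧
      ∀ ξ₀ ξ₁ ξ₂ ξ₃ m M x y : ℝ, ξ₀ - ξ₁ + ξ₂ - ξ₃ = 0 →
        ({x, m, y, M} : Multiset ℝ) = ({ξ₀, ξ₁, ξ₂, ξ₃} : Multiset ℝ) →
        |x| ≤ |m| → |m| ≤ |y| → |y| ≤ |M| →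
        jap ξ₀ ^ (s + a) * jap ξ₁ ^ (-s) * jap ξ₂ ^ (1 - s) * jap ξ₃ ^ (-s) *
            jap (ξ₀ - ξ₁) ^ (-(1/2 - ε)) * jap (ξ₀ - ξ₃) ^ (-(1/2 - ε)) *
            jap m ^ (1/4 : ℝ) * jap M ^ (-(1/4) : ℝ)
          ≤ C := by
  classical
  set s' : ℝ := min s 1 with hs'def
  set m0 : ℝ := min (2 * s' - 1) (1/4) with hm0def
  have hm0a : a < m0 := by
    rcases le_total s 1 with h | h
    · have : s' = s := min_eq_left h
      rw [hm0def, this]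
      exact ha
    · have hs'1 : s' = 1 := min_eq_right h
      have h14 : a < 1/4 := lt_of_lt_of_le ha (min_le_right _ _)
      rw [hm0def, hs'1]
      norm_num
      exact h14
  set g : ℝ := min (m0 - a) (1/8) with hgdef
  have hg : 0 < g := lt_min (by linarith) (by norm_num)
  have hgle : g ≤ 1/8 := min_le_right _ _
  have hgle2 : g ≤ m0 - a := min_le_left _ _
  set a' : ℝ := m0 - g with ha'def
  have hs'1 : 1/2 ≤ s' := le_min (le_of_lt hs) (by norm_num)
  have hs'2 : s' ≤ 1 := min_le_right _ _
  have hs'0 : 1/2 < s' := lt_min hs (by norm_num)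
  have hm0pos : 0 < m0 := lt_min (by linarith) (by norm_num)
  have haa' : a ≤ a' := by rw [ha'def]; linarith
  have hm01 : m0 ≤ 2 * s' - 1 := min_le_left _ _
  have hm02 : m0 ≤ 1/4 := min_le_right _ _
  have ha'1 : a' + 8 * (g/16) ≤ 2 * s' - 1 := by rw [ha'def]; linarith
  have ha'2 : a' + 8 * (g/16) ≤ 1/4 := by rw [ha'def]; linarith
  have ha'3 : -1 ≤ a' := by rw [ha'def]; linarith
  have hss' : 0 ≤ s - s' := sub_nonneg.mpr (min_le_left s 1)
  clear_value s' m0 g a'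
  refine ⟨g/16, Real.exp (100 + 2 * (s - s')), by linarith, Real.exp_pos _, ?_⟩
  intro ξ₀ ξ₁ ξ₂ ξ₃ vm vM vx vy hsum hset hxm hmy hyM
  set L0 : ℝ := Real.log (jap ξ₀) with hL0
  set L1 : ℝ := Real.log (jap ξ₁) with hL1
  set L2 : ℝ := Real.log (jap ξ₂) with hL2
  set L3 : ℝ := Real.log (jap ξ₃) with hL3
  set D1 : ℝ := Real.log (jap (ξ₀ - ξ₁)) with hD1
  set D2 : ℝ := Real.log (jap (ξ₀ - ξ₃)) with hD2
  set Lm : ℝ := Real.log (jap vm) with hLm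
  set LM : ℝ := Real.log (jap vM) with hLM
  -- structural facts
  have hG1 : L0 ≤ L1 + D1 + 1 := by
    have h := lj_add ξ₁ (ξ₀ - ξ₁)
    rw [show ξ₁ + (ξ₀ - ξ₁) = ξ₀ by ring] at h
    exact h
  have hG2 : L1 ≤ L0 + D1 + 1 := by
    have h := lj_sub ξ₀ (ξ₀ - ξ₁)
    rw [show ξ₀ - (ξ₀ - ξ₁) = ξ₁ by ring] at h
    exact h
  have hG3 : L2 ≤ L3 + D1 + 1 := by
    have h := lj_sub ξ₃ (ξ₀ - ξ₁)
    rw [show ξ₃ - (ξ₀ - ξ₁) = ξ₂ by linarith] at h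
    exact h
  have hG4 : L3 ≤ L2 + D1 + 1 := by
    have h := lj_add ξ₂ (ξ₀ - ξ₁)
    rw [show ξ₂ + (ξ₀ - ξ₁) = ξ₃ by linarith] at h
    exact h
  have hG5 : L0 ≤ L3 + D2 + 1 := by
    have h := lj_add ξ₃ (ξ₀ - ξ₃)
    rw [show ξ₃ + (ξ₀ - ξ₃) = ξ₀ by ring] at h
    exact h
  have hG6 : L3 ≤ L0 + D2 + 1 := by
    have h := lj_sub ξ₀ (ξ₀ - ξ₃)
    rw [show ξ₀ - (ξ₀ - ξ₃) = ξ₃ by ring] at h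
    exact h
  have hG7 : L1 ≤ L2 + D2 + 1 := by
    have h := lj_add ξ₂ (ξ₀ - ξ₃)
    rw [show ξ₂ + (ξ₀ - ξ₃) = ξ₁ by linarith] at h
    exact h
  have hG8 : L2 ≤ L1 + D2 + 1 := by
    have h := lj_sub ξ₁ (ξ₀ - ξ₃)
    rw [show ξ₁ - (ξ₀ - ξ₃) = ξ₂ by linarith] at h
    exact h
  have hd1a : D1 ≤ L0 + L1 + 1 := lj_sub ξ₀ ξ₁
  have hd2a : D2 ≤ L0 + L3 + 1 := lj_sub ξ₀ ξ₃
  have hG9 : L0 ≤ L1 + L2 + L3 + 2 := by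
    have h := lj_add ξ₁ (ξ₃ - ξ₂)
    rw [show ξ₁ + (ξ₃ - ξ₂) = ξ₀ by linarith] at h
    have h' := lj_sub ξ₃ ξ₂
    linarith
  have hG10 : L2 ≤ L0 + L1 + L3 + 2 := by
    have h := lj_add ξ₃ (ξ₁ - ξ₀)
    rw [show ξ₃ + (ξ₁ - ξ₀) = ξ₂ by linarith] at h
    have h' := lj_sub ξ₁ ξ₀
    linarith
  have hG11 : L1 ≤ L0 + L2 + L3 + 2 := by
    have h := lj_add ξ₀ (ξ₂ - ξ₃)
    rw [show ξ₀ + (ξ₂ - ξ₃) = ξ₁ by linarith] at h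
    have h' := lj_sub ξ₂ ξ₃
    linarith
  have hG12 : L3 ≤ L0 + L1 + L2 + 2 := by
    have h := lj_add ξ₂ (ξ₀ - ξ₁)
    rw [show ξ₂ + (ξ₀ - ξ₁) = ξ₃ by linarith] at h
    linarith
  -- membership facts: each ξᵢ has |ξᵢ| ≤ |vM|
  have hmemM : ∀ z : ℝ, z ∈ ({ξ₀, ξ₁, ξ₂, ξ₃} : Multiset ℝ) → |z| ≤ |vM| := by
    intro z hz
    rw [← hset] at hz
    simp only [Multiset.insert_eq_cons, Multiset.mem_cons, Multiset.mem_singleton] at hz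
    rcases hz with h | h | h | h <;> rw [h] <;> first
      | exact le_trans hxm (le_trans hmy hyM)
      | exact le_trans hmy hyM
      | exact hyM
      | exact le_refl _
  have hM0 : L0 ≤ LM := lj_mono (hmemM ξ₀ (by simp))
  have hM1 : L1 ≤ LM := lj_mono (hmemM ξ₁ (by simp))
  have hM2 : L2 ≤ LM := lj_mono (hmemM ξ₂ (by simp))
  have hM3 : L3 ≤ LM := lj_mono (hmemM ξ₃ (by simp))
  -- mid facts
  have hset2 : ({vx, vm, vy, vM} : Multiset ℝ) = ({ξ₀, ξ₂, ξ₁, ξ₃} : Multiset ℝ) := by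
    rw [hset]
    simp only [Multiset.insert_eq_cons]
    rw [Multiset.cons_swap ξ₁ ξ₂]
  have hmid13 : |vm| ≤ max |ξ₁| |ξ₃| := mid_le_pair vx vm vy vM ξ₀ ξ₂ ξ₁ ξ₃ hset2 hxm hmy hyM
  have hmid23 : |vm| ≤ max |ξ₂| |ξ₃| := mid_le_pair vx vm vy vM ξ₀ ξ₁ ξ₂ ξ₃ hset hxm hmy hyM
  have hmidL1 : Lm ≤ max L1 L3 := by
    rcases le_total (|ξ₁|) (|ξ₃|) with h | h
    · exact le_max_of_le_right (lj_mono (by rwa [max_eq_right h] at hmid13))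
    · exact le_max_of_le_left (lj_mono (by rwa [max_eq_left h] at hmid13))
  have hmidL2 : Lm ≤ max L2 L3 := by
    rcases le_total (|ξ₂|) (|ξ₃|) with h | h
    · exact le_max_of_le_right (lj_mono (by rwa [max_eq_right h] at hmid23))
    · exact le_max_of_le_left (lj_mono (by rwa [max_eq_left h] at hmid23))
  have hcore := core_bound s' a' (g/16) L0 L1 L2 L3 D1 D2 Lm LM
    hs'1 hs'2 ha'1 ha'2 ha'3 (by linarith) (by linarith)
    (lj_nonneg _) (lj_nonneg _) (lj_nonneg _) (lj_nonneg _) (lj_nonneg _) (lj_nonneg _)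
    (lj_nonneg _) (lj_nonneg _)
    hG1 hG2 hG3 hG4 hG5 hG6 hG7 hG8 hG9 hG10 hG11 hG12 hM0 hM1 hM2 hM3 hmidL1 hmidL2
  -- bridging
  have hb1 : a * L0 ≤ a' * L0 := mul_le_mul_of_nonneg_right haa' (lj_nonneg _)
  have hb2 : (s - s') * (L0 - L1 - L2 - L3) ≤ (s - s') * 2 :=
    mul_le_mul_of_nonneg_left (by linarith) hss'
  -- convert goal to exponential form
  have hrw : ∀ (u e : ℝ), jap u ^ e = Real.exp (Real.log (jap u) * e) :=
    fun u e => Real.rpow_def_of_pos (jap_pos u) e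
  rw [hrw ξ₀, hrw ξ₁, hrw ξ₂, hrw ξ₃, hrw (ξ₀ - ξ₁), hrw (ξ₀ - ξ₃), hrw vm, hrw vM]
  rw [← Real.exp_add, ← Real.exp_add, ← Real.exp_add, ← Real.exp_add, ← Real.exp_add,
    ← Real.exp_add, ← Real.exp_add]
  rw [Real.exp_le_exp]
  simp only [← hL0, ← hL1, ← hL2, ← hL3, ← hD1, ← hD2, ← hLm, ← hLM]
  linarith [hcore, hb1, hb2]
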